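/- arXiv:2007.00911 — 5 statements merged into one kernel-verified Lean document; each statement's English description precedes it below -/
import Mathlib

section
/- Let $m \geq 5$ be an integer and $K$ an algebraically closed field whose characteristic does not divide $m(m-1)$. Let $a, b \in K$ with $b \neq 0$ and $b \neq a^m$. Then there exists $t \in K$ such that the polynomial $x^m - tx + ta - b$ has exactly $m-1$ distinct roots in $K$ (i.e., exactly one root of multiplicity two and all other roots simple). -/
open Polynomial
open scoped Classical

/-!
Take the line through `(a, b)` tangent to `y = x ^ m` at a point `x₀ ≠ 0`: its slope is
`t = m x₀ ^ (m - 1)`, and such an `x₀` is a root of `(1 - m) x ^ m + m a x ^ (m - 1) - b`,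
which has degree `m` and does not vanish at `0` since `b ≠ 0`. Then `x₀` is a root of
multiplicity exactly two of `x ^ m - t x + t a - b`, the second derivative
`m (m - 1) x₀ ^ (m - 2)` being nonzero. Any other multiple root `z` would satisfy
`z ^ (m - 1) = x₀ ^ (m - 1)`, and subtracting the two root equations then gives
`(1 - m) x₀ ^ (m - 1) (z - x₀) = 0`. Counting the `m` roots with multiplicity leaves `m - 1`
distinct ones.
-/

theorem Multiset.card_toFinset_add_one_of_count_eq_two {α : Type*} [DecidableEq α]
    {s : Multiset α} {x : α} (hx : s.count x = 2) (h : ∀ y ≠ x, s.count y ≤ 1) :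
    s.toFinset.card + 1 = Multiset.card s := by
  have hxs : x ∈ s := Multiset.count_pos.1 (by omega)
  have hnodup : (s.erase x).Nodup := by
    refine Multiset.nodup_iff_count_le_one.2 fun y => ?_
    rcases eq_or_ne y x with rfl | hy
    · rw [Multiset.count_erase_self]; omega
    · rw [Multiset.count_erase_of_ne hy]; exact h y hy
  have hset : s.toFinset = (s.erase x).toFinset := by
    ext y
    rcases eq_or_ne y x with rfl | hy
    · simp only [Multiset.mem_toFinset, hxs, true_iff]
      exact Multiset.count_pos.1 (by rw [Multiset.count_erase_self]; omega)
    · simp [Multiset.mem_erase_of_ne hy]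
  rw [hset, Multiset.toFinset_card_of_nodup hnodup, Multiset.card_erase_add_one hxs]

theorem Nat.two_le_of_cast_mul_sub_one_ne_zero {R : Type*} [AddMonoidWithOne R] {m : ℕ}
    (h : ((m * (m - 1) : ℕ) : R) ≠ 0) : 2 ≤ m := by
  by_contra! hm
  interval_cases m <;> simp at h

namespace Polynomial

variable {R : Type*} [CommRing R]

theorem rootMultiplicity_le_one_of_eval_derivative_ne_zero {p : R[X]} {x : R}
    (h : (derivative p).eval x ≠ 0) : p.rootMultiplicity x ≤ 1 := by
  rcases eq_or_ne p 0 with rfl | hp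
  · simp
  exact not_lt.1 fun hlt => h ((one_lt_rootMultiplicity_iff_isRoot hp).1 hlt).2

theorem rootMultiplicity_le_two_of_eval_derivative_derivative_ne_zero {p : R[X]} {x : R}
    (h : (derivative (derivative p)).eval x ≠ 0) : p.rootMultiplicity x ≤ 2 := by
  have hp' : derivative p ≠ 0 := fun hp' => h (by simp [hp'])
  have := rootMultiplicity_sub_one_le_derivative_rootMultiplicity_of_ne_zero p x hp'
  have := rootMultiplicity_le_one_of_eval_derivative_ne_zero h
  omega

/-- `x ^ m - (t (x - a) + b)`: its roots are the abscissae at which the curve `y = x ^ m` meets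
the line of slope `t` through `(a, b)`. -/
noncomputable def powSubLine (m : ℕ) (a b t : R) : R[X] := X ^ m - C t * X + C (t * a - b)

variable {m : ℕ} {a b t x : R}

theorem natDegree_powSubLine [Nontrivial R] (hm : 2 ≤ m) :
    (powSubLine m a b t).natDegree = m := by
  rw [powSubLine, natDegree_add_C, natDegree_sub_eq_left_of_natDegree_lt] <;>
    rw [natDegree_X_pow]
  exact ((natDegree_C_mul_le t X).trans natDegree_X_le).trans_lt hm

theorem eval_powSubLine : (powSubLine m a b t).eval x = x ^ m - t * x + (t * a - b) := by
  simp [powSubLine]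

theorem eval_derivative_powSubLine :
    (derivative (powSubLine m a b t)).eval x = m * x ^ (m - 1) - t := by
  simp [powSubLine, derivative_X_pow]

theorem eval_derivative_derivative_powSubLine :
    (derivative (derivative (powSubLine m a b t))).eval x =
      ((m * (m - 1) : ℕ) : R) * x ^ (m - 2) := by
  simp [powSubLine, derivative_X_pow, mul_assoc, Nat.sub_sub]

theorem powSubLine_ne_zero [Nontrivial R] (hm : 2 ≤ m) : powSubLine m a b t ≠ 0 := by
  intro h
  have := natDegree_powSubLine (a := a) (b := b) (t := t) hm
  rw [h, natDegree_zero] at this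
  omega

variable [IsDomain R]

theorem rootMultiplicity_powSubLine_tangent (hx : x ≠ 0)
    (hchar : ((m * (m - 1) : ℕ) : R) ≠ 0)
    (hroot : (powSubLine m a b (m * x ^ (m - 1))).IsRoot x) :
    (powSubLine m a b (m * x ^ (m - 1))).rootMultiplicity x = 2 := by
  have hm := Nat.two_le_of_cast_mul_sub_one_ne_zero hchar
  have hsecond : (derivative (derivative (powSubLine m a b (m * x ^ (m - 1))))).eval x ≠ 0 := by
    rw [eval_derivative_derivative_powSubLine]
    exact mul_ne_zero hchar (pow_ne_zero _ hx)
  have hfirst : (derivative (powSubLine m a b (m * x ^ (m - 1)))).IsRoot x := by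
    simp [IsRoot, eval_derivative_powSubLine]
  exact le_antisymm (rootMultiplicity_le_two_of_eval_derivative_derivative_ne_zero hsecond)
    ((one_lt_rootMultiplicity_iff_isRoot (powSubLine_ne_zero hm)).2 ⟨hroot, hfirst⟩)

theorem rootMultiplicity_powSubLine_le_one_of_ne {z : R} (hx : x ≠ 0)
    (hchar : ((m * (m - 1) : ℕ) : R) ≠ 0)
    (hroot : (powSubLine m a b (m * x ^ (m - 1))).IsRoot x)
    (hz : z ≠ x) : (powSubLine m a b (m * x ^ (m - 1))).rootMultiplicity z ≤ 1 := by
  have hm := Nat.two_le_of_cast_mul_sub_one_ne_zero hchar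
  rw [Nat.cast_mul, Nat.cast_sub (by omega), Nat.cast_one] at hchar
  obtain ⟨hm0, hm1⟩ := mul_ne_zero_iff.1 hchar
  by_contra! hlt
  obtain ⟨hfz, hf'z⟩ := (one_lt_rootMultiplicity_iff_isRoot (powSubLine_ne_zero hm)).1 hlt
  rw [IsRoot, eval_powSubLine] at hroot hfz
  rw [IsRoot, eval_derivative_powSubLine, ← mul_sub, mul_eq_zero, sub_eq_zero] at hf'z
  have hpow : z ^ (m - 1) = x ^ (m - 1) := hf'z.resolve_left hm0
  have hzm := (mul_pow_sub_one (by omega : m ≠ 0) z).symm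
  have hxm := (mul_pow_sub_one (by omega : m ≠ 0) x).symm
  have hfactor : (m - 1 : R) * x ^ (m - 1) * (z - x) = 0 := by
    linear_combination hroot - hfz + hzm + z * hpow - hxm
  simp [sub_eq_zero, hm1, hx, hz] at hfactor

theorem exists_isRoot_powSubLine_tangent {K : Type*} [Field K] [IsAlgClosed K] {m : ℕ} {a b : K}
    (hchar : ((m * (m - 1) : ℕ) : K) ≠ 0) (hb : b ≠ 0) :
    ∃ x ≠ 0, (powSubLine m a b (m * x ^ (m - 1))).IsRoot x := by
  have hm := Nat.two_le_of_cast_mul_sub_one_ne_zero hchar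
  rw [Nat.cast_mul, Nat.cast_sub (by omega), Nat.cast_one] at hchar
  have hm1 : (1 - m : K) ≠ 0 := by
    rw [← neg_sub]; exact neg_ne_zero.2 (right_ne_zero_of_mul hchar)
  let g : K[X] := C (1 - m : K) * X ^ m + C (m * a) * X ^ (m - 1) - C b
  have hlead : (C (1 - m : K) * X ^ m + C (m * a) * X ^ (m - 1)).degree = (m : WithBot ℕ) := by
    rw [degree_add_eq_left_of_degree_lt] <;> rw [degree_C_mul_X_pow m hm1]
    exact (degree_C_mul_X_pow_le _ _).trans_lt (by exact_mod_cast Nat.sub_lt (by omega) one_pos)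
  have hg : g.degree = (m : WithBot ℕ) := by
    rw [degree_sub_C (by rw [hlead]; exact_mod_cast (by omega : 0 < m)), hlead]
  obtain ⟨x, hx⟩ := IsAlgClosed.exists_root g (by rw [hg]; exact_mod_cast (by omega : m ≠ 0))
  have hxm := (mul_pow_sub_one (by omega : m ≠ 0) x).symm
  refine ⟨x, ?_, ?_⟩
  · rintro rfl
    simp [g, zero_pow (by omega : m ≠ 0), zero_pow (by omega : m - 1 ≠ 0), hb] at hx
  · rw [IsRoot, eval_powSubLine]
    simp only [g, IsRoot, eval_sub, eval_add, eval_mul, eval_C, eval_pow, eval_X] at hx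
    linear_combination hx + (m : K) * hxm

end Polynomial

theorem stmt0_general (K : Type*) [Field K] [IsAlgClosed K] (m : ℕ)
    (hchar : ((m * (m - 1) : ℕ) : K) ≠ 0) (a b : K) (hb : b ≠ 0) :
    ∃ t : K, ((X ^ m - C t * X + C (t * a - b) : K[X]).roots.toFinset.card = m - 1) := by
  obtain ⟨x, hx, hroot⟩ := exists_isRoot_powSubLine_tangent (a := a) hchar hb
  refine ⟨m * x ^ (m - 1), Nat.eq_sub_of_add_eq ?_⟩
  calc _ = Multiset.card (powSubLine m a b (m * x ^ (m - 1))).roots := by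
        refine Multiset.card_toFinset_add_one_of_count_eq_two (x := x) ?_ fun z hz => ?_ <;>
          rw [count_roots]
        · exact rootMultiplicity_powSubLine_tangent hx hchar hroot
        · exact rootMultiplicity_powSubLine_le_one_of_ne hx hchar hroot hz
    _ = m := by
        rw [IsAlgClosed.card_roots_eq_natDegree,
          natDegree_powSubLine (Nat.two_le_of_cast_mul_sub_one_ne_zero hchar)]

/-- For `m ≥ 5`, `K` algebraically closed with characteristic not dividing
`m(m-1)`, and `a b : K` with `b ≠ 0`, `b ≠ a^m`, there exists `t : K` such that
`x^m - t x + t a - b` has exactly `m - 1` distinct roots in `K`. -/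
theorem stmt0 (K : Type*) [Field K] [IsAlgClosed K] (m : ℕ) (hm : 5 ≤ m)
    (hchar : ((m * (m - 1) : ℕ) : K) ≠ 0) (a b : K) (hb : b ≠ 0) (hb' : b ≠ a ^ m) :
    ∃ t : K, ((X ^ m - C t * X + C (t * a - b) : K[X]).roots.toFinset.card = m - 1) :=
  stmt0_general K m hchar a b hb
end

section
/- Let $K$ be a field whose characteristic does not divide $m-1$, where $m \geq 2$. For any $t \in K$ with $t \neq 0$, every root of the polynomial $x^m - tx + ta - b$ in an algebraic closure of $K$ has multiplicity at most $2$. -/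
/-!
A root `x` of `f = X^m - t X + c` of multiplicity at least `3` is a root of `f'` and `f''`.
Since `X f'' = (m - 1) (f' + t)`, evaluating at `x` gives `(m - 1) t = 0`, which is excluded.
-/

open Polynomial

theorem X_mul_derivative_derivative_X_pow {R : Type*} [CommSemiring R] (n : ℕ) :
    X * derivative (derivative (X ^ n : R[X])) = C ((n - 1 : ℕ) : R) * derivative (X ^ n) := by
  rcases n with _ | _ | n
  · simp
  · simp
  · rw [derivative_X_pow, derivative_C_mul, derivative_X_pow]
    simp only [Nat.add_sub_cancel, C_eq_natCast]
    push_cast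
    ring

theorem X_mul_derivative_derivative_X_pow_sub_C_mul_X_add_C {R : Type*} [CommRing R]
    (n : ℕ) (t c : R) :
    X * derivative (derivative (X ^ n - C t * X + C c)) =
      C ((n - 1 : ℕ) : R) * (derivative (X ^ n - C t * X + C c) + C t) := by
  simp only [derivative_add, derivative_sub, derivative_C_mul_X, derivative_C, add_zero,
    sub_zero, sub_add_cancel, X_mul_derivative_derivative_X_pow]

theorem rootMultiplicity_X_pow_sub_C_mul_X_add_C_le_two {R : Type*} [CommRing R] [IsDomain R]
    (n : ℕ) (hn : ((n - 1 : ℕ) : R) ≠ 0) (t c : R) (ht : t ≠ 0) (x : R) :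
    (X ^ n - C t * X + C c).rootMultiplicity x ≤ 2 := by
  have key := congrArg (eval x) (X_mul_derivative_derivative_X_pow_sub_C_mul_X_add_C n t c)
  set f := X ^ n - C t * X + C c
  by_contra! hf
  have hf' : (derivative f).IsRoot x :=
    isRoot_iterate_derivative_of_lt_rootMultiplicity (n := 1) (by omega)
  have hf'' : (derivative (derivative f)).IsRoot x :=
    isRoot_iterate_derivative_of_lt_rootMultiplicity (n := 2) (by omega)
  simp only [eval_mul, eval_add, eval_X, eval_C, hf'.eq_zero, hf''.eq_zero, mul_zero,
    zero_add] at key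
  exact mul_ne_zero hn ht key.symm

theorem stmt1_general (K : Type*) [Field K] (m : ℕ)
    (hchar : (((m - 1 : ℕ)) : K) ≠ 0) (a b t : K) (ht : t ≠ 0) :
    ∀ x : AlgebraicClosure K,
      ((X ^ m - C t * X + C (t * a - b) : K[X]).map
          (algebraMap K (AlgebraicClosure K))).rootMultiplicity x ≤ 2 := by
  intro x
  let ι := algebraMap K (AlgebraicClosure K)
  have hmap : (X ^ m - C t * X + C (t * a - b) : K[X]).map ι =
      X ^ m - C (ι t) * X + C (ι (t * a - b)) := by
    simp only [Polynomial.map_add, Polynomial.map_sub, Polynomial.map_mul, Polynomial.map_pow,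
      map_X, map_C]
  rw [hmap]
  refine rootMultiplicity_X_pow_sub_C_mul_X_add_C_le_two m ?_ _ _
    ((_root_.map_ne_zero ι).mpr ht) x
  rwa [← map_natCast ι, _root_.map_ne_zero]

/-- If the characteristic of `K` does not divide `m - 1` (`m ≥ 2`) and
`t ≠ 0`, then every root of `x^m - t x + t a - b` in an algebraic closure of `K`
has multiplicity at most `2`. -/
theorem stmt1 (K : Type*) [Field K] (m : ℕ) (hm : 2 ≤ m)
    (hchar : (((m - 1 : ℕ)) : K) ≠ 0) (a b t : K) (ht : t ≠ 0) :
    ∀ x : AlgebraicClosure K,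
      ((X ^ m - C t * X + C (t * a - b) : K[X]).map
          (algebraMap K (AlgebraicClosure K))).rootMultiplicity x ≤ 2 :=
  stmt1_general K m hchar a b t ht
end

section
/- Let $K$ be an algebraically closed field with $\mathrm{char}(K) \nmid m(m-1)$, $m \geq 2$, and $a, b \in K$. If $\bar{t} \in K \setminus \{0, m\}$, then the polynomial $x^m - \bar{t}x + \bar{t}a - b$ has at most one root of multiplicity two. -/
open Polynomial

section Trinomial

variable {K : Type*} [Field K] {m : ℕ} {t c z : K}

/-- At a multiple root `z` of `X ^ m - t X + c`, the derivative gives `z ^ m = (t / m) z`,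
which turns the equation into one that is linear in `z`. -/
lemma X_pow_sub_C_mul_X_add_C_eq_of_isRoot_derivative (hm : (m : K) ≠ 0)
    (hm1 : (m : K) - 1 ≠ 0) (ht : t ≠ 0) (h0 : (X ^ m - C t * X + C c).IsRoot z)
    (h1 : (derivative (X ^ m - C t * X + C c)).IsRoot z) :
    z = c * m / (t * (m - 1)) := by
  have hm_pos : 0 < m := Nat.pos_of_ne_zero (by rintro rfl; simp at hm)
  have e0 : z ^ m - t * z + c = 0 := by simpa using h0
  have e1 : (m : K) * z ^ (m - 1) - t = 0 := by simpa [derivative_X_pow] using h1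
  have hzm : z ^ m = z * z ^ (m - 1) := by rw [← pow_succ', Nat.sub_add_cancel hm_pos]
  have hzm1 : z ^ (m - 1) = t / m := by field_simp; linear_combination e1
  rw [hzm, hzm1] at e0
  field_simp at e0
  rw [eq_div_iff (mul_ne_zero ht hm1)]
  linear_combination -e0

lemma X_pow_sub_C_mul_X_add_C_eq_of_one_lt_rootMultiplicity (hm : (m : K) ≠ 0)
    (hm1 : (m : K) - 1 ≠ 0) (ht : t ≠ 0)
    (hz : 1 < (X ^ m - C t * X + C c).rootMultiplicity z) :
    z = c * m / (t * (m - 1)) := by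
  have hp : (X ^ m - C t * X + C c : K[X]) ≠ 0 := by rintro h; simp [h] at hz
  obtain ⟨h0, h1⟩ := (one_lt_rootMultiplicity_iff_isRoot hp).mp hz
  exact X_pow_sub_C_mul_X_add_C_eq_of_isRoot_derivative hm hm1 ht h0 h1

end Trinomial

theorem stmt2_general (K : Type*) [Field K] (m : ℕ)
    (hcharm : ((m : ℕ) : K) ≠ 0) (hcharm1 : (((m - 1 : ℕ)) : K) ≠ 0)
    (a b : K) (t : K) (ht0 : t ≠ 0) :
    ∀ x y : K,
      (X ^ m - C t * X + C (t * a - b) : K[X]).rootMultiplicity x = 2 →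
      (X ^ m - C t * X + C (t * a - b) : K[X]).rootMultiplicity y = 2 →
      x = y := by
  have hm1 : (m : K) - 1 ≠ 0 := by
    rwa [← Nat.cast_pred (Nat.pos_of_ne_zero (by rintro rfl; simp at hcharm))]
  intro x y hx hy
  exact (X_pow_sub_C_mul_X_add_C_eq_of_one_lt_rootMultiplicity hcharm hm1 ht0
    (z := x) (by rw [hx]; exact one_lt_two)).trans
    (X_pow_sub_C_mul_X_add_C_eq_of_one_lt_rootMultiplicity hcharm hm1 ht0
    (z := y) (by rw [hy]; exact one_lt_two)).symm

/-- Over an algebraically closed field `K` with `m` and `m-1` nonzero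
in `K`, for `t̄ ∉ {0, m}` the polynomial `x^m - t̄ x + t̄ a - b` has at most one
root of multiplicity two. -/
theorem stmt2 (K : Type*) [Field K] [IsAlgClosed K] (m : ℕ) (hm : 2 ≤ m)
    (hcharm : ((m : ℕ) : K) ≠ 0) (hcharm1 : (((m - 1 : ℕ)) : K) ≠ 0)
    (a b : K) (t : K) (ht0 : t ≠ 0) (htm : t ≠ (m : K)) :
    ∀ x y : K,
      (X ^ m - C t * X + C (t * a - b) : K[X]).rootMultiplicity x = 2 →
      (X ^ m - C t * X + C (t * a - b) : K[X]).rootMultiplicity y = 2 →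
      x = y :=
  stmt2_general K m hcharm hcharm1 a b t ht0
end

section
/- Let $G$ be a subgroup of the symmetric group on a finite set $\Omega$ with $|\Omega| = m$, and suppose $G$ contains a permutation $\sigma$ whose support is an orbit $\mathcal{O}$ of size $r$ on which $\sigma$ acts as a single cycle of length $r$, where $r$ is prime and $r > m/2$. Then $G$ acting on $\Omega$ is primitive, provided $G$ is transitive. -/
/-!
Translate a nontrivial block `B` so that it meets the support of the `r`-cycle `σ`. If `σ` moved
this block, the prime order of `σ` would give `r` distinct translates of it, each of size at
least two, which do not fit into `m < 2 * r` points. So `σ` fixes the block, which then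
contains the whole support of `σ`: more than half of `Ω`, forcing the block to be everything.
-/

open MulAction Pointwise

/-- The stabilizer of `B` meets `⟨g⟩` in `⊥` or `⟨g⟩`; in the first case `B` has at least
`orderOf g` translates. -/
theorem MulAction.IsBlock.smul_eq_of_card_lt_orderOf_mul {G X : Type*} [Group G]
    [MulAction G X] [IsPretransitive G X] [Finite X] {B : Set X} (hB : IsBlock G B) {g : G}
    (hg : (orderOf g).Prime) (hcard : Nat.card X < orderOf g * B.ncard) : g • B = B := by
  have hB_ne : B.Nonempty := Set.nonempty_of_ncard_ne_zero fun h => by simp [h] at hcard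
  have hdvd : (stabilizer G B).relIndex (Subgroup.zpowers g) ∣ orderOf g :=
    Nat.card_zpowers g ▸ Subgroup.relIndex_dvd_card _ _
  rcases hg.eq_one_or_self_of_dvd _ hdvd with h | h
  · exact Subgroup.relIndex_eq_one.mp h (Subgroup.mem_zpowers g)
  · have horbit : orderOf g ≤ (orbit G B).ncard := by
      rw [← index_stabilizer, ← Subgroup.relIndex_top_right, ← h]
      refine Subgroup.relIndex_le_of_le_right le_top ?_
      rw [Subgroup.relIndex_top_right, index_stabilizer]
      exact ((Set.ncard_pos (Set.toFinite _)).mpr ⟨B, mem_orbit_self B⟩).ne'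
    have := hB.ncard_block_mul_ncard_orbit_eq hB_ne
    nlinarith

theorem Equiv.Perm.IsCycle.support_subset_of_smul_eq {α : Type*} [Fintype α] [DecidableEq α]
    {σ : Equiv.Perm α} (hσ : σ.IsCycle) {s : Set α} (hs : σ • s = s) {x : α} (hx : x ∈ s)
    (hσx : σ x ≠ x) : (σ.support : Set α) ⊆ s := by
  intro y hy
  obtain ⟨i, rfl⟩ := hσ.exists_zpow_eq hσx (Equiv.Perm.mem_support.mp hy)
  have hsi : (σ ^ i) • s = s := (stabilizer (Equiv.Perm α) s).zpow_mem hs i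
  exact hsi ▸ Set.smul_mem_smul_set hx

theorem stmt8_general (Ω : Type*) [Fintype Ω] [DecidableEq Ω] (m : ℕ) (hΩ : Fintype.card Ω = m)
    (G : Subgroup (Equiv.Perm Ω)) (r : ℕ) (hr : r.Prime) (hrm : m < 2 * r)
    (σ : Equiv.Perm Ω) (hσG : σ ∈ G) (hσ : σ.IsCycle) (hsupp : σ.support.card = r)
    (htrans : MulAction.IsPretransitive G Ω) :
    ∀ B : Set Ω, MulAction.IsBlock G B → B.Subsingleton ∨ B = Set.univ := by
  intro B hB
  refine or_iff_not_imp_left.mpr fun hB_nt => ?_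
  obtain ⟨a, ha, b, hb, hab⟩ := Set.not_subsingleton_iff.mp hB_nt
  have hB_card : 1 < B.ncard := (Set.one_lt_ncard B.toFinite).mpr ⟨a, ha, b, hb, hab⟩
  obtain ⟨x, hx⟩ := hσ.nonempty_support
  obtain ⟨g, hga⟩ := exists_smul_eq G a x
  have hσ_order : orderOf (⟨σ, hσG⟩ : G) = r := by
    rw [Subgroup.orderOf_mk, hσ.orderOf, hsupp]
  have hσ_fix : (⟨σ, hσG⟩ : G) • (g • B) = g • B := by
    refine (hB.translate g).smul_eq_of_card_lt_orderOf_mul (hσ_order ▸ hr) ?_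
    rw [Set.ncard_smul_set, hσ_order, Nat.card_eq_fintype_card, hΩ]
    nlinarith
  have hsupp_sub : (σ.support : Set Ω) ⊆ g • B :=
    hσ.support_subset_of_smul_eq hσ_fix (hga ▸ Set.smul_mem_smul_set ha)
      (Equiv.Perm.mem_support.mp hx)
  have hr_le : r ≤ B.ncard := by
    simpa [hsupp] using Set.ncard_le_ncard hsupp_sub (Set.toFinite _)
  refine hB.eq_univ_of_card_lt ?_
  rw [Nat.card_eq_fintype_card, hΩ]
  omega

/-- A transitive subgroup `G` of the symmetric group on a finite set `Ω`
of size `m` containing an `r`-cycle, for a prime `r` with `m/2 < r ≤ m`, is primitive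
(i.e. every block of the action of `G` on `Ω` is trivial). -/
theorem stmt8 (Ω : Type*) [Fintype Ω] [DecidableEq Ω] (m : ℕ) (hΩ : Fintype.card Ω = m)
    (G : Subgroup (Equiv.Perm Ω)) (r : ℕ) (hr : r.Prime) (hrm : m < 2 * r) (hrm' : r ≤ m)
    (σ : Equiv.Perm Ω) (hσG : σ ∈ G) (hσ : σ.IsCycle) (hsupp : σ.support.card = r)
    (htrans : MulAction.IsPretransitive G Ω) :
    ∀ B : Set Ω, MulAction.IsBlock G B → B.Subsingleton ∨ B = Set.univ :=
  stmt8_general Ω m hΩ G r hr hrm σ hσG hσ hsupp htrans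
end

section
/- Let $C$ be a smooth projective curve of genus $g$ over $\mathbb{F}_q$ and let $N_m$ denote the number of $\mathbb{F}_{q^m}$-rational points. Then there exists a strictly increasing sequence $(m_k)$ of positive integers such that $(N_{m_k} - (q^{m_k}+1))/q^{m_k/2} \to -2g$ as $k \to \infty$. -/
open Filter Topology

/-!
Dividing by `√q ^ m` turns the error term `N m - (q ^ m + 1)` into `-∑ j, 2 Re (z j ^ m)` with
`z j = α j / √q` on the unit circle. In the compact group `(Fin g → Circle)` the identity is a
cluster point of the powers of `z`, so along a subsequence all `z j ^ m` tend to `1` simultaneously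
and the normalized error tends to `-2g`.
-/

theorem exists_strictMono_pos_tendsto_pow_one {G : Type*} [Group G] [TopologicalSpace G]
    [CompactSpace G] [IsTopologicalGroup G] [FirstCountableTopology G] (x : G) :
    ∃ m : ℕ → ℕ, StrictMono m ∧ (∀ k, 0 < m k) ∧ Tendsto (fun k => x ^ m k) atTop (𝓝 1) := by
  obtain ⟨ψ, hψ, hlim⟩ := (mapClusterPt_one_atTop_pow x).tendsto_subseq
  exact ⟨ψ ∘ Nat.succ, hψ.comp Order.succ_strictMono,
    fun k => (Nat.zero_le _).trans_lt (hψ k.lt_succ_self),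
    hlim.comp (tendsto_add_atTop_nat 1)⟩

theorem weil_error_div_sqrt_pow_eq {q g m : ℕ} (α : Fin g → ℂ) {Nm : ℤ}
    (hN : (Nm : ℂ) = (q : ℂ) ^ m + 1 - ∑ j : Fin g, ((α j) ^ m + (starRingEnd ℂ) (α j) ^ m)) :
    ((Nm : ℝ) - ((q : ℝ) ^ m + 1)) / Real.sqrt q ^ m
      = -∑ j, 2 * ((α j / Real.sqrt q) ^ m).re := by
  apply Complex.ofReal_injective
  push_cast
  rw [hN]
  simp only [div_pow, ← Complex.ofReal_pow, Complex.div_ofReal_re, ← map_pow, Complex.add_conj]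
  push_cast
  simp only [← mul_div_assoc, ← Finset.sum_div]
  ring

/-- For a genus-`g` curve over `𝔽_q` with Weil numbers `α_j` of modulus `√q`
(closed under conjugation, so `N m = q^m + 1 - ∑_j (α_j^m + conj(α_j)^m)`), there is a
strictly increasing sequence `m_k` of positive integers with
`(N_{m_k} - (q^{m_k}+1))/q^{m_k/2} → -2g`. -/
theorem stmt17 (q : ℕ) (hq : 2 ≤ q) (g : ℕ) (α : Fin g → ℂ)
    (habs : ∀ j, ‖α j‖ = Real.sqrt q) (N : ℕ → ℤ)
    (hN : ∀ m : ℕ, 1 ≤ m → (N m : ℂ) = (q : ℂ) ^ m + 1 -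
      ∑ j : Fin g, ((α j) ^ m + (starRingEnd ℂ) (α j) ^ m)) :
    ∃ m : ℕ → ℕ, StrictMono m ∧ (∀ k, 0 < m k) ∧
      Tendsto (fun k => ((N (m k) : ℝ) - ((q : ℝ) ^ (m k) + 1)) / (Real.sqrt q) ^ (m k))
        atTop (nhds (-2 * (g : ℝ))) := by
  have hsqrt : 0 < Real.sqrt q := Real.sqrt_pos.2 (Nat.cast_pos.2 (by omega))
  let z : Fin g → Circle := fun j =>
    ⟨α j / Real.sqrt q, mem_sphere_zero_iff_norm.2 (by simp [habs, abs_of_pos hsqrt, hsqrt.ne'])⟩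
  obtain ⟨m, hmono, hpos, hlim⟩ := exists_strictMono_pos_tendsto_pow_one z
  refine ⟨m, hmono, hpos, ?_⟩
  have hcont : Continuous fun w : Fin g → Circle => -∑ j, 2 * (w j : ℂ).re := by fun_prop
  convert (hcont.tendsto 1).comp hlim using 2 with k
  · rw [weil_error_div_sqrt_pow_eq α (hN _ (hpos k))]
    rfl
  · simp [mul_comm]
end
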